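/- arXiv:2212.13157 — 3 statements merged into one kernel-verified Lean document; each statement's English description precedes it below -/
import Mathlib

section
/- Let u > 0 and suppose s ≤ −1 is a real number satisfying s·e^s = −e^{−u−1}. Then s > −1 − √(2u) − u. -/
/-!
With `v = -s` the equation reads `u = v - 1 - log v`, and `v ↦ v - 1 - log v` is nondecreasing
on `[1, ∞)`. At `w = 1 + a + a ^ 2 / 2` with `a = √(2u)` it already exceeds `u`, because
`w < exp a` gives `log w < a`. Hence `v < w`.
-/

namespace Real

theorem one_add_add_sq_div_two_lt_exp {x : ℝ} (hx : 0 < x) : 1 + x + x ^ 2 / 2 < exp x := by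
  have h := sum_le_exp_of_nonneg hx.le 4
  norm_num [Finset.sum_range_succ, Nat.factorial] at h
  nlinarith [pow_pos hx 3]

theorem log_sub_log_le_sub {v w : ℝ} (hw : 1 ≤ w) (hwv : w ≤ v) : log v - log w ≤ v - w := by
  have hw₀ : 0 < w := by linarith
  rw [← log_div (by linarith) hw₀.ne']
  calc log (v / w) ≤ v / w - 1 := log_le_sub_one_of_pos (div_pos (by linarith) hw₀)
    _ = (v - w) / w := by field_simp
    _ ≤ v - w := div_le_self (by linarith) hw

theorem eq_neg_sub_one_sub_log_neg_of_mul_exp_eq {u s : ℝ} (h : s * exp s = -exp (-u - 1)) :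
    u = -s - 1 - log (-s) := by
  have hs : 0 < -s := by
    have : s * exp s < 0 := h ▸ neg_neg_of_pos (exp_pos _)
    linarith [neg_of_mul_neg_left this (exp_pos s).le]
  have : log (-s) + s = -u - 1 := by
    apply exp_injective
    rw [exp_add, exp_log hs]
    linarith
  linarith

end Real

theorem stmt_7_general (u s : ℝ) (hu : u > 0)
    (heq : s * Real.exp s = -Real.exp (-u - 1)) :
    s > -1 - Real.sqrt (2 * u) - u := by
  set a := Real.sqrt (2 * u)
  have ha : 0 < a := Real.sqrt_pos.2 (by linarith)
  have hu_sq : u = a ^ 2 / 2 := by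
    rw [Real.sq_sqrt (by linarith)]
    ring
  have hlog : Real.log (1 + a + u) < a := by
    rw [Real.log_lt_iff_lt_exp (by positivity), hu_sq]
    exact Real.one_add_add_sq_div_two_lt_exp ha
  by_contra! h
  have hmono := Real.log_sub_log_le_sub (v := -s) (w := 1 + a + u) (by linarith) (by linarith)
  have hu_eq := Real.eq_neg_sub_one_sub_log_neg_of_mul_exp_eq heq
  linarith

theorem stmt_7 (u s : ℝ) (hu : u > 0) (hs : s ≤ -1)
    (heq : s * Real.exp s = -Real.exp (-u - 1)) :
    s > -1 - Real.sqrt (2 * u) - u :=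
  stmt_7_general u s hu heq
end

section
/- Let σ > 0, set C₁ = 8/log(1+σ⁻²) and C₂ = σ⁻²/log(1+σ⁻²). Suppose (v_i)_{i=1}^{t} are reals with 0 ≤ v_i ≤ 1, (β_i)_{i=1}^{t} is a nondecreasing sequence of positive reals, and (b_i)_{i=1}^{t} is a nonincreasing sequence of reals such that b_i² ≤ 4·β_i·v_i for all i. Let G = (1/2)·∑_{i=1}^{t} log(1 + σ⁻²·v_i). Then b_t ≤ √(C₁·β_t·G / t). -/
/-! Since `b` is nonincreasing and `β` nondecreasing, every `b_i² ≤ 4 β_i v_i` gives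
`b_t² ≤ 4 β_t v_i`. Concavity of `log` on `[1, 1 + σ⁻²]` bounds `v_i ≤ log (1 + σ⁻² v_i) / log (1 + σ⁻²)`
for `v_i ∈ [0, 1]`, and summing over `i ≤ t` gives `t b_t² ≤ C₁ β_t G`. -/

open Finset Real

lemma mul_log_one_add_le_log_one_add_mul {c x : ℝ} (hc : -1 < c) (hx₀ : 0 ≤ x) (hx₁ : x ≤ 1) :
    x * log (1 + c) ≤ log (1 + c * x) := by
  have h := strictConcaveOn_log_Ioi.concaveOn.2 (Set.mem_Ioi.mpr one_pos)
    (Set.mem_Ioi.mpr (by linarith : (0 : ℝ) < 1 + c)) (sub_nonneg.mpr hx₁) hx₀ (by ring)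
  simp only [smul_eq_mul, log_one, mul_zero, zero_add] at h
  rwa [show (1 - x) * 1 + x * (1 + c) = 1 + c * x by ring] at h

lemma le_sqrt_div_of_mul_sq_le {b x t : ℝ} (ht : 0 < t) (h : t * b ^ 2 ≤ x) : b ≤ √(x / t) :=
  (le_abs_self b).trans <| abs_le_sqrt <| (le_div_iff₀ ht).mpr <| by linarith

theorem stmt_12_general (σ : ℝ) (hσ : σ > 0) (C₁ : ℝ)
    (hC₁ : C₁ = 8 / Real.log (1 + σ⁻¹ ^ 2))
    (t : ℕ) (ht : 1 ≤ t) (v β b : ℕ → ℝ)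
    (hv : ∀ i, 1 ≤ i → i ≤ t → 0 ≤ v i ∧ v i ≤ 1)
    (hβpos : ∀ i, 1 ≤ i → i ≤ t → 0 < β i)
    (hβmono : ∀ i j, 1 ≤ i → i ≤ j → j ≤ t → β i ≤ β j)
    (hbmono : ∀ i j, 1 ≤ i → i ≤ j → j ≤ t → b j ≤ b i)
    (hb : ∀ i, 1 ≤ i → i ≤ t → (b i) ^ 2 ≤ 4 * β i * v i)
    (G : ℝ) (hG : G = (1 / 2) * ∑ i ∈ Finset.Icc 1 t, Real.log (1 + σ⁻¹ ^ 2 * v i)) :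
    b t ≤ Real.sqrt (C₁ * β t * G / t) := by
  rcases le_or_gt (b t) 0 with hbt | hbt
  · exact hbt.trans (sqrt_nonneg _)
  have hlog : 0 < log (1 + σ⁻¹ ^ 2) := log_pos (lt_add_of_pos_right _ (by positivity))
  have hβt : 0 < β t := hβpos t ht le_rfl
  have key : ∀ i ∈ Icc 1 t, b t ^ 2 ≤ 4 * β t / log (1 + σ⁻¹ ^ 2) * log (1 + σ⁻¹ ^ 2 * v i) := by
    intro i hi
    obtain ⟨hi₁, hit⟩ := mem_Icc.mp hi
    obtain ⟨hv₀, hv₁⟩ := hv i hi₁ hit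
    have hconc := mul_log_one_add_le_log_one_add_mul (c := σ⁻¹ ^ 2)
      (neg_one_lt_zero.trans_le (by positivity)) hv₀ hv₁
    calc b t ^ 2 ≤ b i ^ 2 := pow_le_pow_left₀ hbt.le (hbmono i t hi₁ hit le_rfl) 2
      _ ≤ 4 * β i * v i := hb i hi₁ hit
      _ ≤ 4 * β t * v i := by gcongr; exact hβmono i t hi₁ hit le_rfl
      _ ≤ 4 * β t / log (1 + σ⁻¹ ^ 2) * log (1 + σ⁻¹ ^ 2 * v i) := by
        rw [div_mul_eq_mul_div, le_div_iff₀ hlog, mul_assoc]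
        gcongr
  apply le_sqrt_div_of_mul_sq_le (by exact_mod_cast ht)
  calc (t : ℝ) * b t ^ 2 = #(Icc 1 t) • b t ^ 2 := by simp
    _ ≤ ∑ i ∈ Icc 1 t, 4 * β t / log (1 + σ⁻¹ ^ 2) * log (1 + σ⁻¹ ^ 2 * v i) :=
      card_nsmul_le_sum _ _ _ key
    _ = C₁ * β t * G := by rw [← mul_sum, hC₁, hG]; ring

theorem stmt_12 (σ : ℝ) (hσ : σ > 0) (C₁ C₂ : ℝ)
    (hC₁ : C₁ = 8 / Real.log (1 + σ⁻¹ ^ 2))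
    (hC₂ : C₂ = σ⁻¹ ^ 2 / Real.log (1 + σ⁻¹ ^ 2))
    (t : ℕ) (ht : 1 ≤ t) (v β b : ℕ → ℝ)
    (hv : ∀ i, 1 ≤ i → i ≤ t → 0 ≤ v i ∧ v i ≤ 1)
    (hβpos : ∀ i, 1 ≤ i → i ≤ t → 0 < β i)
    (hβmono : ∀ i j, 1 ≤ i → i ≤ j → j ≤ t → β i ≤ β j)
    (hbmono : ∀ i j, 1 ≤ i → i ≤ j → j ≤ t → b j ≤ b i)
    (hb : ∀ i, 1 ≤ i → i ≤ t → (b i) ^ 2 ≤ 4 * β i * v i)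
    (G : ℝ) (hG : G = (1 / 2) * ∑ i ∈ Finset.Icc 1 t, Real.log (1 + σ⁻¹ ^ 2 * v i)) :
    b t ≤ Real.sqrt (C₁ * β t * G / t) :=
  stmt_12_general σ hσ C₁ hC₁ t ht v β b hv hβpos hβmono hbmono hb G hG
end

section
/- Let ε > 0 and suppose for every i with 1 ≤ i ≤ t we have ε² ≤ β_i·v_i with 0 ≤ v_i ≤ 1 and 0 < β_i ≤ β_t (β nondecreasing). Let σ > 0, C₁ = 8/log(1+σ⁻²), C₂ = σ⁻²/log(1+σ⁻²), and G = (1/2)∑_{i=1}^t log(1+σ⁻²·v_i). Then C₁·β_t·G ≥ 4·t·ε², i.e., 2ε ≤ √(C₁·β_t·G/t). -/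
open Finset Real

/-!
Every round contributes at least `ε² / β_t · log (1 + σ⁻²)` to `2 G`: the hypotheses give
`v_i ≥ ε² / β_t`, and concavity of `log (1 + σ⁻² ·)` gives `log (1 + σ⁻² v) ≥ v log (1 + σ⁻²)`
on `[0, 1]`. Summing over the `t` rounds is the first claim; the second is its square root.
-/

/-- Bernoulli's inequality `(1 + x) ^ v ≤ 1 + v x` for `v ∈ [0, 1]`, after taking logarithms. -/
lemma mul_log_one_add_le_log_one_add_mul_s16 {x v : ℝ} (hx : -1 < x) (hv₀ : 0 ≤ v)
    (hv₁ : v ≤ 1) :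
    v * log (1 + x) ≤ log (1 + x * v) := by
  have hpos : 0 < 1 + x := by linarith
  calc v * log (1 + x) = log ((1 + x) ^ v) := (log_rpow hpos v).symm
    _ ≤ log (1 + x * v) := by
      rw [mul_comm x]
      exact log_le_log (rpow_pos_of_pos hpos v)
        (rpow_one_add_le_one_add_mul_self hx.le hv₀ hv₁)

lemma mul_log_one_add_le_mul_log_one_add_mul {a B x v : ℝ} (hx : 0 ≤ x) (hv₀ : 0 ≤ v)
    (hv₁ : v ≤ 1) (hB : 0 ≤ B) (ha : a ≤ B * v) :
    a * log (1 + x) ≤ B * log (1 + x * v) := by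
  have hL : 0 ≤ log (1 + x) := log_nonneg (by linarith)
  calc a * log (1 + x) ≤ B * v * log (1 + x) := mul_le_mul_of_nonneg_right ha hL
    _ = B * (v * log (1 + x)) := mul_assoc _ _ _
    _ ≤ B * log (1 + x * v) :=
      mul_le_mul_of_nonneg_left (mul_log_one_add_le_log_one_add_mul_s16 (by linarith) hv₀ hv₁) hB

lemma card_mul_log_one_add_le_mul_sum {ι : Type*} (s : Finset ι) {a B x : ℝ} (v β : ι → ℝ)
    (hx : 0 ≤ x) (hv : ∀ i ∈ s, 0 ≤ v i ∧ v i ≤ 1) (hβ : ∀ i ∈ s, β i ≤ B)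
    (hB : 0 ≤ B) (ha : ∀ i ∈ s, a ≤ β i * v i) :
    #s * a * log (1 + x) ≤ B * ∑ i ∈ s, log (1 + x * v i) := by
  have hterm : ∀ i ∈ s, a * log (1 + x) ≤ B * log (1 + x * v i) := fun i hi =>
    mul_log_one_add_le_mul_log_one_add_mul hx (hv i hi).1 (hv i hi).2 hB
      ((ha i hi).trans (mul_le_mul_of_nonneg_right (hβ i hi) (hv i hi).1))
  rw [mul_assoc, mul_sum, ← nsmul_eq_mul]
  exact card_nsmul_le_sum s _ _ hterm

theorem stmt_16_general (ε : ℝ) (σ : ℝ) (hσ : σ > 0) (C₁ : ℝ)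
    (hC₁ : C₁ = 8 / Real.log (1 + σ⁻¹ ^ 2))
    (t : ℕ) (ht : 1 ≤ t) (v β : ℕ → ℝ)
    (hv : ∀ i, 1 ≤ i → i ≤ t → 0 ≤ v i ∧ v i ≤ 1)
    (hβpos : ∀ i, 1 ≤ i → i ≤ t → 0 < β i)
    (hβle : ∀ i, 1 ≤ i → i ≤ t → β i ≤ β t)
    (hεβ : ∀ i, 1 ≤ i → i ≤ t → ε ^ 2 ≤ β i * v i)
    (G : ℝ) (hG : G = (1 / 2) * ∑ i ∈ Finset.Icc 1 t, Real.log (1 + σ⁻¹ ^ 2 * v i)) :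
    C₁ * β t * G ≥ 4 * t * ε ^ 2 ∧ 2 * ε ≤ Real.sqrt (C₁ * β t * G / t) := by
  have hL : 0 < log (1 + σ⁻¹ ^ 2) := log_pos (lt_add_of_pos_right 1 (by positivity))
  have hsum := card_mul_log_one_add_le_mul_sum (Icc 1 t) (x := σ⁻¹ ^ 2) v β (by positivity)
    (fun i hi => hv i (mem_Icc.1 hi).1 (mem_Icc.1 hi).2)
    (fun i hi => hβle i (mem_Icc.1 hi).1 (mem_Icc.1 hi).2) (hβpos t ht le_rfl).le
    (fun i hi => hεβ i (mem_Icc.1 hi).1 (mem_Icc.1 hi).2)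
  rw [Nat.card_Icc, Nat.add_sub_cancel] at hsum
  have hmain : 4 * t * ε ^ 2 ≤ C₁ * β t * G := by
    have hC₁G : C₁ * β t * G =
        4 * (β t * ∑ i ∈ Icc 1 t, log (1 + σ⁻¹ ^ 2 * v i)) / log (1 + σ⁻¹ ^ 2) := by
      rw [hC₁, hG]; ring
    rw [hC₁G, le_div_iff₀ hL]
    linarith
  have ht₀ : (0 : ℝ) < t := by exact_mod_cast ht
  refine ⟨hmain, (le_abs_self _).trans (abs_le_sqrt ?_)⟩
  rw [le_div_iff₀ ht₀]
  linarith

theorem stmt_16 (ε : ℝ) (hε : ε > 0) (σ : ℝ) (hσ : σ > 0) (C₁ C₂ : ℝ)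
    (hC₁ : C₁ = 8 / Real.log (1 + σ⁻¹ ^ 2))
    (hC₂ : C₂ = σ⁻¹ ^ 2 / Real.log (1 + σ⁻¹ ^ 2))
    (t : ℕ) (ht : 1 ≤ t) (v β : ℕ → ℝ)
    (hv : ∀ i, 1 ≤ i → i ≤ t → 0 ≤ v i ∧ v i ≤ 1)
    (hβpos : ∀ i, 1 ≤ i → i ≤ t → 0 < β i)
    (hβle : ∀ i, 1 ≤ i → i ≤ t → β i ≤ β t)
    (hεβ : ∀ i, 1 ≤ i → i ≤ t → ε ^ 2 ≤ β i * v i)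
    (G : ℝ) (hG : G = (1 / 2) * ∑ i ∈ Finset.Icc 1 t, Real.log (1 + σ⁻¹ ^ 2 * v i)) :
    C₁ * β t * G ≥ 4 * t * ε ^ 2 ∧ 2 * ε ≤ Real.sqrt (C₁ * β t * G / t) :=
  stmt_16_general ε σ hσ C₁ hC₁ t ht v β hv hβpos hβle hεβ G hG
end
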